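/- In the quasi unit disc graph model with radii r_min ≤ r_max ≤ √2 · r_min, suppose u and v are nodes with uv ∈ E(G) (so d(p_u, p_v) ≤ r_max), and let p be a point on the segment [p_u, p_v]. If w is a node with d(p, p_w) < d(p, p_u) and d(p, p_w) < d(p, p_v), then d(p_u, p_w) ≤ r_min or d(p_v, p_w) ≤ r_min; in particular w is a neighbor of u or of v in G, and hence uw is an edge of G². -/

import Mathlib

/-!
The ball around `q` of radius `min (dist q p_u) (dist q p_v)` is internally tangent to the disc
with diameter `[p_u, p_v]`, so `p_w` lies in that disc. By Apollonius' theorem,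
`d(p_u, p_w)² + d(p_v, p_w)² < d(p_u, p_v)² ≤ r_max² ≤ 2 r_min²`, so one of the two distances
is at most `r_min`.
-/

open Metric AffineMap

section Segment

variable {E : Type*} [NormedAddCommGroup E] [NormedSpace ℝ E] {x y q : E}

theorem dist_midpoint_add_min_dist_of_mem_segment (hq : q ∈ segment ℝ x y) :
    dist q (midpoint ℝ x y) + min (dist q x) (dist q y) = dist x y / 2 := by
  rw [segment_eq_image_lineMap] at hq
  obtain ⟨b, ⟨hb0, hb1⟩, rfl⟩ := hq
  rw [← lineMap_inv_two, dist_lineMap_lineMap, dist_lineMap_left, dist_lineMap_right,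
    Real.dist_eq, Real.norm_of_nonneg hb0, Real.norm_of_nonneg (sub_nonneg.2 hb1),
    ← min_mul_of_nonneg _ _ dist_nonneg]
  rcases le_total b 2⁻¹ with hb | hb
  · rw [abs_of_nonpos (by linarith), min_eq_left (by linarith)]; ring
  · rw [abs_of_nonneg (by linarith), min_eq_right (by linarith)]; ring

theorem ball_subset_ball_midpoint_of_mem_segment (hq : q ∈ segment ℝ x y) :
    ball q (min (dist q x) (dist q y)) ⊆ ball (midpoint ℝ x y) (dist x y / 2) :=
  ball_subset_ball' <| by
    rw [add_comm]
    exact (dist_midpoint_add_min_dist_of_mem_segment hq).le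

end Segment

theorem dist_sq_add_dist_sq_lt_of_mem_ball_midpoint {E : Type*} [NormedAddCommGroup E]
    [InnerProductSpace ℝ E] {x y w : E} (hw : w ∈ ball (midpoint ℝ x y) (dist x y / 2)) :
    dist x w ^ 2 + dist y w ^ 2 < dist x y ^ 2 := by
  rw [dist_comm x, dist_comm y,
    EuclideanGeometry.dist_sq_add_dist_sq_eq_two_mul_dist_midpoint_sq_add_half_dist_sq]
  nlinarith [mem_ball.1 hw, dist_nonneg (x := w) (y := midpoint ℝ x y)]

theorem le_or_le_of_sq_add_sq_lt {a b d r : ℝ} (h : a ^ 2 + b ^ 2 < d ^ 2) (hd : 0 ≤ d)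
    (hdr : d ≤ √2 * r) : a ≤ r ∨ b ≤ r := by
  have hr : 0 ≤ r := nonneg_of_mul_nonneg_right (hd.trans hdr) (Real.sqrt_pos.2 two_pos)
  have hd2 : d ^ 2 ≤ 2 * r ^ 2 := by
    calc d ^ 2 ≤ (√2 * r) ^ 2 := pow_le_pow_left₀ hd hdr 2
      _ = 2 * r ^ 2 := by rw [mul_pow, Real.sq_sqrt zero_le_two]
  by_contra! hab
  nlinarith [hab.1, hab.2]

theorem qudg_two_hop_general
    {V : Type*} (rmin rmax : ℝ)
    (hr2 : rmax ≤ Real.sqrt 2 * rmin)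
    (p : V → EuclideanSpace ℝ (Fin 2))
    (G : SimpleGraph V)
    (hGmin : ∀ u v : V, u ≠ v → dist (p u) (p v) ≤ rmin → G.Adj u v)
    (hGmax : ∀ u v : V, G.Adj u v → dist (p u) (p v) ≤ rmax)
    (u v w : V) (huv : G.Adj u v)
    (q : EuclideanSpace ℝ (Fin 2)) (hq : q ∈ segment ℝ (p u) (p v))
    (hwu : dist q (p w) < dist q (p u)) (hwv : dist q (p w) < dist q (p v)) :
    (dist (p u) (p w) ≤ rmin ∨ dist (p v) (p w) ≤ rmin) ∧
      (G.Adj u w ∨ G.Adj v w) ∧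
      (G.Adj u w ∨ ∃ x : V, G.Adj u x ∧ G.Adj x w) := by
  have hw : p w ∈ ball (midpoint ℝ (p u) (p v)) (dist (p u) (p v) / 2) :=
    ball_subset_ball_midpoint_of_mem_segment hq <| mem_ball.2 <| by
      rw [dist_comm]; exact lt_min hwu hwv
  have hclose : dist (p u) (p w) ≤ rmin ∨ dist (p v) (p w) ≤ rmin :=
    le_or_le_of_sq_add_sq_lt (dist_sq_add_dist_sq_lt_of_mem_ball_midpoint hw) dist_nonneg
      ((hGmax u v huv).trans hr2)
  have hne {x : V} (h : dist q (p w) < dist q (p x)) : x ≠ w := by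
    rintro rfl
    exact h.false
  have hadj : G.Adj u w ∨ G.Adj v w := hclose.imp (hGmin u w (hne hwu)) (hGmin v w (hne hwv))
  exact ⟨hclose, hadj, hadj.imp_right fun h => ⟨v, huv, h⟩⟩

/-- Quasi unit disc graphs with `r_max ≤ √2 · r_min`: if `uv` is an edge and a node `w`
is strictly closer to a point `q` of the segment `[p_u, p_v]` than both `u` and `v`,
then `w` is within range `r_min` of `u` or of `v`; in particular `w` is a neighbor of
`u` or of `v`, and `uw` is an edge of `G²`. -/
theorem qudg_two_hop
    {V : Type*} [Fintype V] (rmin rmax : ℝ) (hrmin : 0 < rmin)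
    (hr1 : rmin ≤ rmax) (hr2 : rmax ≤ Real.sqrt 2 * rmin)
    (p : V → EuclideanSpace ℝ (Fin 2)) (hp : Function.Injective p)
    (G : SimpleGraph V)
    (hGmin : ∀ u v : V, u ≠ v → dist (p u) (p v) ≤ rmin → G.Adj u v)
    (hGmax : ∀ u v : V, G.Adj u v → dist (p u) (p v) ≤ rmax)
    (u v w : V) (huv : G.Adj u v)
    (q : EuclideanSpace ℝ (Fin 2)) (hq : q ∈ segment ℝ (p u) (p v))
    (hwu : dist q (p w) < dist q (p u)) (hwv : dist q (p w) < dist q (p v)) :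
    (dist (p u) (p w) ≤ rmin ∨ dist (p v) (p w) ≤ rmin) ∧
      (G.Adj u w ∨ G.Adj v w) ∧
      (G.Adj u w ∨ ∃ x : V, G.Adj u x ∧ G.Adj x w) :=
  qudg_two_hop_general rmin rmax hr2 p G hGmin hGmax u v w huv q hq hwu hwv
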